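/- Let R be a commutative ring, let s be a ring automorphism of R with s ∘ s = id, let R^s := { r ∈ R : s(r) = r } be the fixed subring, and suppose δ ∈ R is such that (1, δ) is a basis of R as a module over R^s. Let B := R ⊗_{R^s} R, with (R,R)-bimodule structure r · (a ⊗ b) · r' = (r a) ⊗ (b r'). Then: the map ν : R → B, r ↦ r ⊗ δ − r·s(δ) ⊗ 1, is injective and satisfies ν(r a r') = r · ν(a) · r' for all r, a, r' ∈ R; the map π : B → R determined by a ⊗ b ↦ a·s(b) is well defined, additive and surjective, and satisfies π(r · u · r') = r · π(u) · s(r') for all r, r' ∈ R and u ∈ B; and the kernel of π equals the image of ν. Consequently there is a short exact sequence of (R,R)-bimodules 0 → Δ_e → B → Δ_s → 0, where Δ_e denotes R with the standard bimodule structure and Δ_s denotes R with the bimodule structure r · m · r' = r m s(r'). -/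

import Mathlib

/-!
The map `π = mul ∘ (id ⊗ s)` is a ring homomorphism `R ⊗_{R^s} R → R`, which gives its
bimodule property at once. As `(1, δ)` spans `R` over `R^s`, every `u` is `p ⊗ 1 + ν(q)`, and
applying `π` (which kills `ν`) shows `p = π u`; hence `ker π = im ν`. The `δ`-coordinate
applied to the right factor recovers `q` from `ν(q)`, so `ν` is injective. Finally
`ν(q) = (q ⊗ 1) ν(1)`, so the bimodule property of `ν` amounts to `ν(1) (r ⊗ 1) = ν(1) (1 ⊗ r)`;
by linearity it suffices to take `r = δ`, where it is the relation `δ² - (δ + s δ) δ + s δ δ = 0`,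
whose coefficients lie in `R^s`.
-/

open TensorProduct

/-- The subring of fixed points of a ring automorphism. -/
def fixedSubring {R : Type*} [CommRing R] (s : R ≃+* R) : Subring R :=
  RingHom.eqLocus (s : R →+* R) (RingHom.id R)

/-- Left outer multiplication `u ↦ r · u` on `R ⊗_S R`, for `S` a subring of `R`. -/
noncomputable def actLeft {R : Type*} [CommRing R] (S : Subring R) (r : R) :
    R ⊗[S] R →ₗ[S] R ⊗[S] R :=
  LinearMap.rTensor R (LinearMap.mulLeft S r)

/-- Right outer multiplication `u ↦ u · r'` on `R ⊗_S R`, for `S` a subring of `R`. -/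
noncomputable def actRight {R : Type*} [CommRing R] (S : Subring R) (r' : R) :
    R ⊗[S] R →ₗ[S] R ⊗[S] R :=
  LinearMap.lTensor R (LinearMap.mulRight S r')

/-- The map `ν : R → R ⊗_{R^s} R`, `r ↦ r ⊗ δ − (r · s(δ)) ⊗ 1`. -/
noncomputable def nuMap {R : Type*} [CommRing R] (s : R ≃+* R) (δ : R) (r : R) :
    R ⊗[fixedSubring s] R :=
  r ⊗ₜ[fixedSubring s] δ - (r * s δ) ⊗ₜ[fixedSubring s] (1 : R)

section TensorOverSubring

variable {R : Type*} [CommRing R] (S : Subring R)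

theorem actLeft_apply (r : R) (u : R ⊗[S] R) : actLeft S r u = (r ⊗ₜ[S] 1) * u := by
  induction u using TensorProduct.induction_on with
  | zero => simp
  | tmul a b => simp [actLeft, Algebra.TensorProduct.tmul_mul_tmul]
  | add x y hx hy => rw [map_add, hx, hy, mul_add]

theorem actRight_apply (r' : R) (u : R ⊗[S] R) : actRight S r' u = u * (1 ⊗ₜ[S] r') := by
  induction u using TensorProduct.induction_on with
  | zero => simp
  | tmul a b => simp [actRight, Algebra.TensorProduct.tmul_mul_tmul]
  | add x y hx hy => rw [map_add, hx, hy, add_mul]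

theorem mul_tmul_eq_tmul_mul_of_mem {x : R} (hx : x ∈ S) (a b : R) :
    (x * a) ⊗ₜ[S] b = a ⊗ₜ[S] (x * b) :=
  smul_tmul (⟨x, hx⟩ : S) a b

end TensorOverSubring

section Involution

variable {R : Type*} [CommRing R] (s : R ≃+* R)

def fixedSubringAlgHom : R →ₐ[fixedSubring s] R :=
  { (s : R →+* R) with commutes' := fun t => t.2 }

noncomputable def piMap : R ⊗[fixedSubring s] R →ₐ[fixedSubring s] R :=
  Algebra.TensorProduct.productMap (AlgHom.id _ R) (fixedSubringAlgHom s)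

@[simp]
theorem piMap_tmul (a b : R) : piMap s (a ⊗ₜ b) = a * s b := rfl

theorem piMap_surjective : Function.Surjective (piMap s) :=
  fun r => ⟨r ⊗ₜ 1, by simp⟩

theorem piMap_actLeft_actRight (r r' : R) (u : R ⊗[fixedSubring s] R) :
    piMap s (actLeft _ r (actRight _ r' u)) = r * piMap s u * s r' := by
  rw [actLeft_apply, actRight_apply, map_mul, map_mul, piMap_tmul, piMap_tmul, map_one,
    mul_one, one_mul, mul_assoc]

variable (δ : R)

theorem nuMap_eq_tmul_one_mul (r : R) : nuMap s δ r = (r ⊗ₜ 1) * nuMap s δ 1 := by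
  simp [nuMap, mul_sub, Algebra.TensorProduct.tmul_mul_tmul]

theorem nuMap_add (q q' : R) : nuMap s δ (q + q') = nuMap s δ q + nuMap s δ q' := by
  simp only [nuMap, add_mul, add_tmul]
  abel

theorem piMap_nuMap (r : R) : piMap s (nuMap s δ r) = 0 := by
  simp [nuMap, mul_comm]

theorem exists_eq_tmul_one_add_nuMap (hspan : Submodule.span (fixedSubring s) {1, δ} = ⊤)
    (u : R ⊗[fixedSubring s] R) : ∃ p q : R, u = p ⊗ₜ 1 + nuMap s δ q := by
  induction u using TensorProduct.induction_on with
  | zero => exact ⟨0, 0, by simp [nuMap]⟩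
  | tmul a b =>
    obtain ⟨x, y, rfl⟩ := Submodule.mem_span_pair.1 (hspan ▸ Submodule.mem_top : b ∈ _)
    refine ⟨x • a + (y • a) * s δ, y • a, ?_⟩
    rw [nuMap, tmul_add, ← smul_tmul, ← smul_tmul, add_tmul]
    abel
  | add u v hu hv =>
    obtain ⟨p, q, rfl⟩ := hu
    obtain ⟨p', q', rfl⟩ := hv
    exact ⟨p + p', q + q', by rw [add_tmul, nuMap_add]; abel⟩

theorem eq_piMap_tmul_one_add_nuMap (hspan : Submodule.span (fixedSubring s) {1, δ} = ⊤)
    (u : R ⊗[fixedSubring s] R) : ∃ q : R, u = piMap s u ⊗ₜ 1 + nuMap s δ q := by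
  obtain ⟨p, q, rfl⟩ := exists_eq_tmul_one_add_nuMap s δ hspan u
  exact ⟨q, by simp [piMap_nuMap]⟩

theorem piMap_eq_zero_iff (hspan : Submodule.span (fixedSubring s) {1, δ} = ⊤)
    (u : R ⊗[fixedSubring s] R) : piMap s u = 0 ↔ ∃ r : R, u = nuMap s δ r := by
  refine ⟨fun hu => ?_, fun ⟨r, hr⟩ => hr ▸ piMap_nuMap s δ r⟩
  obtain ⟨q, hq⟩ := eq_piMap_tmul_one_add_nuMap s δ hspan u
  exact ⟨q, by rw [hq, hu, zero_tmul, zero_add]⟩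

theorem nuMap_injective (c : R →ₗ[fixedSubring s] fixedSubring s) (hc1 : c 1 = 0)
    (hcδ : c δ = 1) : Function.Injective (nuMap s δ) := by
  let f := (TensorProduct.rid (fixedSubring s) R).toLinearMap ∘ₗ LinearMap.lTensor R c
  have hf : Function.LeftInverse f (nuMap s δ) := fun r => by
    simp [f, nuMap, hc1, hcδ]
  exact hf.injective

theorem nuMap_one_mul_tmul_one (hinv : ∀ r : R, s (s r) = r)
    (hspan : Submodule.span (fixedSubring s) {1, δ} = ⊤) (r : R) :
    nuMap s δ 1 * (r ⊗ₜ 1) = nuMap s δ 1 * (1 ⊗ₜ r) := by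
  have hσ : δ + s δ ∈ fixedSubring s :=
    show s (δ + s δ) = δ + s δ by rw [map_add, hinv, add_comm]
  have hρ : s δ * δ ∈ fixedSubring s :=
    show s (s δ * δ) = s δ * δ by rw [map_mul, hinv, mul_comm]
  have hroot : (δ + s δ) ⊗ₜ[fixedSubring s] δ - (s δ * δ) ⊗ₜ[fixedSubring s] (1 : R) =
      1 ⊗ₜ (δ * δ) := by
    rw [← mul_one (δ + s δ), ← mul_one (s δ * δ), mul_tmul_eq_tmul_mul_of_mem _ hσ,
      mul_tmul_eq_tmul_mul_of_mem _ hρ, ← tmul_sub]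
    congr 1
    ring
  have hδ : nuMap s δ 1 * (δ ⊗ₜ 1) = nuMap s δ 1 * (1 ⊗ₜ δ) := by
    simp only [nuMap, sub_mul, Algebra.TensorProduct.tmul_mul_tmul, mul_one, one_mul]
    rw [← hroot, add_tmul]
    abel
  have hext := LinearMap.ext_on hspan
    (f := LinearMap.mulLeft _ (nuMap s δ 1) ∘ₗ (TensorProduct.mk _ R R).flip 1)
    (g := LinearMap.mulLeft _ (nuMap s δ 1) ∘ₗ TensorProduct.mk _ R R 1)
    (by rintro _ (rfl | rfl) <;> simp [hδ])
  exact LinearMap.congr_fun hext r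

theorem nuMap_mul_mul (hinv : ∀ r : R, s (s r) = r)
    (hspan : Submodule.span (fixedSubring s) {1, δ} = ⊤) (r a r' : R) :
    nuMap s δ (r * a * r') = actLeft _ r (actRight _ r' (nuMap s δ a)) := by
  rw [actLeft_apply, actRight_apply, nuMap_eq_tmul_one_mul s δ a,
    nuMap_eq_tmul_one_mul s δ (r * a * r')]
  have hsplit :
      (r * a * r') ⊗ₜ[fixedSubring s] (1 : R) = (r ⊗ₜ 1) * (a ⊗ₜ 1) * (r' ⊗ₜ 1) := by
    simp [Algebra.TensorProduct.tmul_mul_tmul]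
  rw [hsplit]
  linear_combination (r ⊗ₜ[fixedSubring s] (1 : R)) * (a ⊗ₜ 1) *
    nuMap_one_mul_tmul_one s δ hinv hspan r'

end Involution

section SubringBasis

variable {R : Type*} [CommRing R] (S : Subring R) (δ : R)

theorem span_one_delta_eq_top (hbasis : ∀ r : R, ∃! p : S × S, r = (p.1 : R) + (p.2 : R) * δ) :
    Submodule.span S {1, δ} = ⊤ := by
  refine Submodule.eq_top_iff'.2 fun r => Submodule.mem_span_pair.2 ?_
  obtain ⟨p, hp, -⟩ := hbasis r
  exact ⟨p.1, p.2, by simp [Subring.smul_def, hp]⟩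

theorem linearIndependent_one_delta
    (hbasis : ∀ r : R, ∃! p : S × S, r = (p.1 : R) + (p.2 : R) * δ) :
    LinearIndependent S ![1, δ] := by
  refine LinearIndependent.pair_iff.2 fun x y hxy => ?_
  have hxy0 : ((x, y) : S × S) = 0 :=
    (hbasis 0).unique (by simpa [Subring.smul_def, eq_comm] using hxy) (by simp)
  simpa [Prod.ext_iff] using hxy0

theorem exists_coord_delta (hbasis : ∀ r : R, ∃! p : S × S, r = (p.1 : R) + (p.2 : R) * δ) :
    ∃ c : R →ₗ[S] S, c 1 = 0 ∧ c δ = 1 := by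
  have hsp : ⊤ ≤ Submodule.span S (Set.range ![1, δ]) := by
    rw [Matrix.range_cons_cons_empty, span_one_delta_eq_top S δ hbasis]
  refine ⟨(Module.Basis.mk (linearIndependent_one_delta S δ hbasis) hsp).coord 1, ?_, ?_⟩
  · exact Module.Basis.mk_coord_apply_ne (i := 1) (j := 0) (by decide)
  · exact Module.Basis.mk_coord_apply_eq (i := 1)

end SubringBasis

/-- Lemma 2.4 of Bezrukavnikov–Riche, "Hecke action on the principal block", second exact
sequence (`Δ_e ↪ R ⊗_{R^s} R ↠ Δ_s`): if `s` is a ring involution of `R` and `(1, δ)` is a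
basis of `R` over the fixed subring `R^s`, then the map `ν : r ↦ r ⊗ δ − (r · s δ) ⊗ 1` is
injective and satisfies `ν(r a r') = r · ν(a) · r'`; the map `π` determined by
`a ⊗ b ↦ a · s(b)` is a well-defined surjective additive map satisfying
`π(r · u · r') = r · π(u) · s(r')`; and the kernel of `π` is exactly the image of `ν`. -/
theorem stmt_7 {R : Type*} [CommRing R] (s : R ≃+* R) (hinv : ∀ r : R, s (s r) = r)
    (δ : R)
    (hbasis : ∀ r : R, ∃! p : (fixedSubring s) × (fixedSubring s),
      r = (p.1 : R) + (p.2 : R) * δ) :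
    Function.Injective (nuMap s δ) ∧
    (∀ r a r' : R,
      nuMap s δ (r * a * r') =
        actLeft (fixedSubring s) r (actRight (fixedSubring s) r' (nuMap s δ a))) ∧
    ∃ π : (R ⊗[fixedSubring s] R) →+ R,
      (∀ a b : R, π (a ⊗ₜ[fixedSubring s] b) = a * s b) ∧
      Function.Surjective π ∧
      (∀ (r r' : R) (u : R ⊗[fixedSubring s] R),
        π (actLeft (fixedSubring s) r (actRight (fixedSubring s) r' u)) = r * π u * s r') ∧
      (∀ u : R ⊗[fixedSubring s] R, π u = 0 ↔ ∃ r : R, u = nuMap s δ r) := by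
  have hspan := span_one_delta_eq_top _ δ hbasis
  obtain ⟨c, hc1, hcδ⟩ := exists_coord_delta _ δ hbasis
  exact ⟨nuMap_injective s δ c hc1 hcδ, nuMap_mul_mul s δ hinv hspan,
    (piMap s).toRingHom.toAddMonoidHom, piMap_tmul s, piMap_surjective s,
    piMap_actLeft_actRight s, piMap_eq_zero_iff s δ hspan⟩
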